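/- Let Y be a topological space and let 𝔞 be an ideal of the polynomial ring A = MvPolynomial (Fin m) C(Y, ℝ) in m indeterminates over the ring of continuous real-valued functions on Y. Then there exists an open dense subset U ⊆ Y such that every x ∈ U has an open neighborhood V for which the ideal of MvPolynomial (Fin m) C(V, ℝ) generated by the images of the elements of 𝔞 under the coefficientwise restriction homomorphism is finitely generated. (Semi-Noetherian property: ideals of polynomial rings over rings of continuous functions are locally finitely generated over an open dense set.) -/

import Mathlib

/-- The restriction ring homomorphism `C(Y, ℝ) →+* C(V, ℝ)` for a subset `V ⊆ Y`. -/
def restrictHom {Y : Type*} [TopologicalSpace Y] (V : Set Y) :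
    C(Y, ℝ) →+* C(V, ℝ) where
  toFun f := f.restrict V
  map_one' := rfl
  map_mul' _ _ := rfl
  map_zero' := rfl
  map_add' _ _ := rfl

/-! Fix a monomial order. On an open set `V`, a finite family in the restricted ideal whose
leading coefficients are units generates it as soon as its leading exponents divide the leading
exponent of every nonzero element (division algorithm). If some nonzero `r` escapes, its leading
coefficient is a nonzero continuous function, hence a unit on the nonempty open set where it does
not vanish; shrinking `V` to that set, `r` joins the family and the monoid ideal of leading
exponents grows strictly. By Dickson's lemma this cannot go on forever, so every nonempty open set
contains a nonempty open set on which the restricted ideal is finitely generated, and the union of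
all such open sets is open and dense. -/

open MvPolynomial

namespace MonomialOrder

variable {σ R S : Type*} [CommRing R] [CommRing S] (o : MonomialOrder σ)

theorem degree_map_of_map_leadingCoeff_ne_zero (f : R →+* S) {p : MvPolynomial σ R}
    (h : f (o.leadingCoeff p) ≠ 0) : o.degree (map f p) = o.degree p := by
  refine o.toSyn.injective (le_antisymm
    (o.degree_le_iff.2 fun c hc => o.le_degree (support_map_subset f p hc)) (o.le_degree ?_))
  rwa [mem_support_iff, coeff_map]

theorem leadingCoeff_map_of_map_leadingCoeff_ne_zero (f : R →+* S) {p : MvPolynomial σ R}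
    (h : f (o.leadingCoeff p) ≠ 0) : o.leadingCoeff (map f p) = f (o.leadingCoeff p) := by
  rw [leadingCoeff, o.degree_map_of_map_leadingCoeff_ne_zero f h, coeff_map, leadingCoeff]

theorem span_eq_of_forall_exists_degree_le {I : Ideal (MvPolynomial σ R)}
    {B : Set (MvPolynomial σ R)} (hBI : B ⊆ I) (hB : ∀ b ∈ B, IsUnit (o.leadingCoeff b))
    (hI : ∀ p ∈ I, p ≠ 0 → ∃ b ∈ B, o.degree b ≤ o.degree p) :
    Ideal.span B = I := by
  refine le_antisymm (Ideal.span_le.2 hBI) fun p hp => ?_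
  obtain ⟨g, r, hpr, -, hr⟩ := o.div_set hB p
  have hcomb : Finsupp.linearCombination _ (fun b : B => (b : MvPolynomial σ R)) g
      ∈ Ideal.span B := by
    have := LinearMap.mem_range_self
      (Finsupp.linearCombination (MvPolynomial σ R) (fun b : B => (b : MvPolynomial σ R))) g
    rwa [Finsupp.range_linearCombination, Subtype.range_coe] at this
  have hrI : r ∈ I := by
    rw [eq_sub_of_add_eq' hpr.symm]
    exact I.sub_mem hp (Ideal.span_le.2 hBI hcomb)
  obtain rfl : r = 0 := by
    by_contra hr0
    obtain ⟨b, hb, hle⟩ := hI r hrI hr0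
    exact hr _ (o.degree_mem_support hr0) b hb hle
  rw [hpr, add_zero]
  exact hcomb

end MonomialOrder

namespace AddSemigroupIdeal

variable {M : Type*} [AddCommMonoid M] [PartialOrder M] [CanonicallyOrderedAdd M]

theorem mem_closure_iff_exists_le {D : Set M} {d : M} :
    d ∈ closure D ↔ ∃ d' ∈ D, d' ≤ d := by
  simp only [mem_closure'', le_iff_exists_add']
  exact ⟨fun ⟨y, z, hz, h⟩ => ⟨z, hz, y, h.symm⟩, fun ⟨z, hz, y, h⟩ => ⟨y, z, hz, h.symm⟩⟩

theorem closure_lt_closure_insert {D : Set M} {d : M} (hd : ∀ d' ∈ D, ¬ d' ≤ d) :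
    closure D < closure (insert d D) := by
  refine SetLike.lt_iff_le_and_exists.2
    ⟨closure_mono (Set.subset_insert d D), d, mem_closure_of_mem (Set.mem_insert d D), ?_⟩
  rw [mem_closure_iff_exists_le]
  rintro ⟨d', hd', hle⟩
  exact hd d' hd' hle

end AddSemigroupIdeal

section Restriction

variable {Y σ : Type*} [TopologicalSpace Y]

def restrictSubsetHom {V W : Set Y} (h : W ⊆ V) : C(V, ℝ) →+* C(W, ℝ) :=
  (ContinuousMap.compRightAlgHom ℝ ℝ (ContinuousMap.inclusion h)).toRingHom

theorem restrictSubsetHom_comp_restrictHom {V W : Set Y} (h : W ⊆ V) :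
    (restrictSubsetHom h).comp (restrictHom V) = restrictHom W :=
  rfl

noncomputable def restrictIdeal (V : Set Y) (𝔞 : Ideal (MvPolynomial σ C(Y, ℝ))) :
    Ideal (MvPolynomial σ C(V, ℝ)) :=
  Ideal.map (MvPolynomial.map (restrictHom V)) 𝔞

theorem map_restrictSubsetHom_mem_restrictIdeal {𝔞 : Ideal (MvPolynomial σ C(Y, ℝ))}
    {V W : Set Y} (h : W ⊆ V) {p : MvPolynomial σ C(V, ℝ)} (hp : p ∈ restrictIdeal V 𝔞) :
    map (restrictSubsetHom h) p ∈ restrictIdeal W 𝔞 := by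
  have : restrictIdeal W 𝔞 = Ideal.map (map (restrictSubsetHom h)) (restrictIdeal V 𝔞) := by
    rw [restrictIdeal, restrictIdeal, Ideal.map_map]
    congr 1
    exact RingHom.ext fun q => by
      rw [RingHom.comp_apply, map_map, restrictSubsetHom_comp_restrictHom]
  rw [this]
  exact Ideal.mem_map_of_mem _ hp

theorem exists_isOpen_subset_isUnit_restrictSubsetHom {V : Set Y} (hV : IsOpen V)
    {c : C(V, ℝ)} (hc : c ≠ 0) :
    ∃ W, ∃ h : W ⊆ V, IsOpen W ∧ W.Nonempty ∧ IsUnit (restrictSubsetHom h c) := by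
  obtain ⟨z, hz⟩ := DFunLike.ne_iff.1 hc
  refine ⟨Subtype.val '' {z | c z ≠ 0}, Subtype.coe_image_subset V _,
    hV.isOpenMap_subtype_val _ (isOpen_compl_singleton.preimage c.continuous),
    ⟨z, z, hz, rfl⟩, ?_⟩
  rw [ContinuousMap.isUnit_iff_forall_ne_zero]
  rintro ⟨_, z, hz, rfl⟩
  exact hz

theorem exists_restrict_insert_degree (o : MonomialOrder σ) {𝔞 : Ideal (MvPolynomial σ C(Y, ℝ))}
    {V : Set Y} (hV : IsOpen V) {B : Set (MvPolynomial σ C(V, ℝ))} (hBfin : B.Finite)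
    (hBI : B ⊆ restrictIdeal V 𝔞) (hBu : ∀ b ∈ B, IsUnit (o.leadingCoeff b))
    {r : MvPolynomial σ C(V, ℝ)} (hrI : r ∈ restrictIdeal V 𝔞) (hr0 : r ≠ 0) :
    ∃ W ⊆ V, IsOpen W ∧ W.Nonempty ∧ ∃ B' : Set (MvPolynomial σ C(W, ℝ)), B'.Finite ∧
      B' ⊆ restrictIdeal W 𝔞 ∧ (∀ b ∈ B', IsUnit (o.leadingCoeff b)) ∧
      o.degree '' B' = insert (o.degree r) (o.degree '' B) := by
  obtain ⟨W, hWV, hW, hWne, hunit⟩ :=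
    exists_isOpen_subset_isUnit_restrictSubsetHom hV (o.leadingCoeff_ne_zero_iff.2 hr0)
  have : Nonempty W := hWne.to_subtype
  set ρ := restrictSubsetHom hWV
  have hmap : ∀ p, IsUnit (ρ (o.leadingCoeff p)) →
      o.degree (map ρ p) = o.degree p ∧ IsUnit (o.leadingCoeff (map ρ p)) := fun p hp =>
    ⟨o.degree_map_of_map_leadingCoeff_ne_zero ρ hp.ne_zero,
      o.leadingCoeff_map_of_map_leadingCoeff_ne_zero ρ hp.ne_zero ▸ hp⟩
  have hmapB : ∀ b ∈ B, o.degree (map ρ b) = o.degree b ∧ IsUnit (o.leadingCoeff (map ρ b)) :=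
    fun b hb => hmap b ((hBu b hb).map ρ)
  refine ⟨W, hWV, hW, hWne, insert (map ρ r) (map ρ '' B), (hBfin.image _).insert _, ?_, ?_, ?_⟩
  · refine Set.insert_subset (map_restrictSubsetHom_mem_restrictIdeal hWV hrI) ?_
    rintro _ ⟨b, hb, rfl⟩
    exact map_restrictSubsetHom_mem_restrictIdeal hWV (hBI hb)
  · rintro _ (rfl | ⟨b, hb, rfl⟩)
    exacts [(hmap r hunit).2, (hmapB b hb).2]
  · rw [Set.image_insert_eq, Set.image_image, (hmap r hunit).1]
    congr 1
    exact Set.image_congr fun b hb => (hmapB b hb).1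

theorem exists_isOpen_subset_fg_restrictIdeal [Finite σ] (𝔞 : Ideal (MvPolynomial σ C(Y, ℝ)))
    {O : Set Y} (hO : IsOpen O) (hne : O.Nonempty) :
    ∃ V ⊆ O, IsOpen V ∧ V.Nonempty ∧ (restrictIdeal V 𝔞).FG := by
  let _ : LinearOrder σ := IsWellOrder.linearOrder WellOrderingRel
  let o : MonomialOrder σ := MonomialOrder.lex
  let S : Set (AddSemigroupIdeal (σ →₀ ℕ)) :=
    {I | ∃ V ⊆ O, IsOpen V ∧ V.Nonempty ∧ ∃ B : Set (MvPolynomial σ C(V, ℝ)), B.Finite ∧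
      B ⊆ restrictIdeal V 𝔞 ∧ (∀ b ∈ B, IsUnit (o.leadingCoeff b)) ∧
      I = AddSemigroupIdeal.closure (o.degree '' B)}
  have hS : S.Nonempty :=
    ⟨_, O, subset_rfl, hO, hne, ∅, Set.finite_empty, Set.empty_subset _, by simp, rfl⟩
  obtain ⟨_, ⟨V, hVO, hV, hVne, B, hBfin, hBI, hBu, rfl⟩, hmax⟩ := wellFounded_gt.has_min S hS
  refine ⟨V, hVO, hV, hVne, ?_⟩
  have hspan : Ideal.span B = restrictIdeal V 𝔞 := by
    refine o.span_eq_of_forall_exists_degree_le hBI hBu fun r hrI hr0 => ?_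
    by_contra! hr
    obtain ⟨W, hWV, hW, hWne, B', hB'fin, hB'I, hB'u, hdeg⟩ :=
      exists_restrict_insert_degree o hV hBfin hBI hBu hrI hr0
    refine hmax _ ⟨W, hWV.trans hVO, hW, hWne, B', hB'fin, hB'I, hB'u, rfl⟩ ?_
    rw [hdeg]
    exact AddSemigroupIdeal.closure_lt_closure_insert (Set.forall_mem_image.2 hr)
  exact hspan ▸ Submodule.fg_span hBfin

end Restriction

theorem dense_sUnion_of_forall_exists_subset {Y : Type*} [TopologicalSpace Y] {P : Set Y → Prop}
    (h : ∀ O, IsOpen O → O.Nonempty → ∃ V ⊆ O, IsOpen V ∧ V.Nonempty ∧ P V) :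
    Dense (⋃₀ {V | IsOpen V ∧ P V}) := by
  rw [dense_iff_inter_open]
  intro O hO hne
  obtain ⟨V, hVO, hV, ⟨x, hx⟩, hPV⟩ := h O hO hne
  exact ⟨x, hVO hx, V, ⟨hV, hPV⟩, hx⟩

/-- semi-Noetherian property: for any ideal `𝔞` of the polynomial ring
`MvPolynomial (Fin m) C(Y, ℝ)` over the ring of continuous functions on a topological
space `Y`, there is an open dense set `U ⊆ Y` such that every `x ∈ U` has an open
neighborhood `V` on which the restriction of `𝔞` (the ideal generated by the images of
elements of `𝔞` under coefficientwise restriction) is finitely generated. -/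
theorem stmt9 {Y : Type*} [TopologicalSpace Y] (m : ℕ)
    (𝔞 : Ideal (MvPolynomial (Fin m) C(Y, ℝ))) :
    ∃ U : Set Y, IsOpen U ∧ Dense U ∧ ∀ x ∈ U, ∃ V : Set Y, IsOpen V ∧ x ∈ V ∧
      (Ideal.map (MvPolynomial.map (σ := Fin m) (restrictHom V)) 𝔞).FG := by
  refine ⟨⋃₀ {V | IsOpen V ∧ (restrictIdeal V 𝔞).FG}, isOpen_sUnion fun V hV => hV.1,
    dense_sUnion_of_forall_exists_subset fun O hO hne =>
      exists_isOpen_subset_fg_restrictIdeal 𝔞 hO hne, ?_⟩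
  rintro x ⟨V, ⟨hV, hfg⟩, hx⟩
  exact ⟨V, hV, hx, hfg⟩
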